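/- Let c ≥ 0, β < 0, and let J : ℝ → ℝ be continuous, strictly positive, and 2π-periodic. Set g₀ = Ω(c, β)/max_{x∈ℝ} J(x), where Ω(c, β) = min_{λ>0} f_{c,β}(λ). If 0 < g < g₀, then for every λ > 0, every differentiable φ : ℝ → ℝ satisfying φ'(z) = λ h(φ(z)) + λ g R_λ(z) w(φ(z)) for all z ∈ ℝ and φ(0) = π satisfies φ(π) − φ(−π) < 2π; in particular no rotating wave exists. -/

import Mathlib

/-- The Heaviside step function. -/
noncomputable def Heav (z : ℝ) : ℝ := if z < 0 then 0 else 1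

/-- The synaptic profile `r_λ(z)`, given by formula (3.10); on `(-π, π) \ {0}` (the only
values relevant to the integrals below) it equals
`(1/2) e^{-(λz + (c/2)H(z))} [H(z) + (e^{2πλ + c/2} - 1)⁻¹]`. -/
noncomputable def rTheta (c lam z : ℝ) : ℝ :=
  (1 / 2) * Real.exp (-(lam * z + (c / 2) * Heav z)) *
    (Heav z + (Real.exp (2 * Real.pi * lam + c / 2) - 1)⁻¹)

/-- `R_λ(z) = ∫_{-π}^{π} J(z - y) r_λ(y) dy` (formula (3.13)). -/
noncomputable def RTheta (J : ℝ → ℝ) (c lam z : ℝ) : ℝ :=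
  ∫ y in (-Real.pi)..Real.pi, J (z - y) * rTheta c lam y

/-- `h(θ) = 1 - cos θ + β(1 + cos θ)`. -/
noncomputable def hTheta (β θ : ℝ) : ℝ := 1 - Real.cos θ + β * (1 + Real.cos θ)

/-- `w(θ) = 1 + cos θ`. -/
noncomputable def wTheta (θ : ℝ) : ℝ := 1 + Real.cos θ

/-- `ρ_c(λ) = (e^{2πλ} - 1)/(e^{2πλ + c/2} - 1)`. -/
noncomputable def rhoC (c lam : ℝ) : ℝ :=
  (Real.exp (2 * Real.pi * lam) - 1) / (Real.exp (2 * Real.pi * lam + c / 2) - 1)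

/-- `f_{c,β}(λ) = (1 - 4βλ²)/(2λ ρ_c(λ))`. -/
noncomputable def fCB (c β lam : ℝ) : ℝ := (1 - 4 * β * lam ^ 2) / (2 * lam * rhoC c lam)

/-!
Since `0 ≤ r_λ`, `∫ r_λ = ρ_c(λ)/(2λ)` and `w ≥ 0`, the equation for `φ` gives the differential
inequality `φ' ≤ λ hTheta b φ` with `b = β + g (max J) ρ_c(λ)/(2λ)`, and `g < g₀` implies
`4λ²b < 1`. For `0 < b < 1/(4λ²)` the equation `θ' = λ hTheta b θ`, `θ 0 = π`, has the explicit
solution `π + 2 arctan (tan (λ√b z)/√b)`, which exists and stays below `2π` up to time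
`π/(2λ√b) > π`.
Comparison gives `φ π < 2π`, and the same argument for the reflection `z ↦ 2π - φ (-z)` gives
`φ (-π) > 0`.
-/

open Real Set MeasureTheory intervalIntegral

section ThetaFlow

lemma hTheta_add_mul_wTheta (β K θ : ℝ) : hTheta β θ + K * wTheta θ = hTheta (β + K) θ := by
  unfold hTheta wTheta; ring

lemma hTheta_two_pi_sub (β θ : ℝ) : hTheta β (2 * π - θ) = hTheta β θ := by
  rw [hTheta, hTheta, cos_two_pi_sub]

lemma wTheta_nonneg (θ : ℝ) : 0 ≤ wTheta θ := by
  unfold wTheta; linarith [neg_one_le_cos θ]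

lemma cos_pi_add_two_mul_arctan (u : ℝ) : cos (π + 2 * arctan u) = (u ^ 2 - 1) / (1 + u ^ 2) := by
  rw [add_comm, cos_add_pi, cos_two_mul, cos_sq_arctan]
  field_simp
  ring

/-- With `u = tan ((θ - π) / 2)` the equation `θ' = λ hTheta b θ` becomes the Riccati equation
`u' = λ (1 + b u²)`, solved by `u = tan (λ √b z) / √b`. -/
noncomputable def thetaFlow (lam b z : ℝ) : ℝ := π + 2 * arctan (tan (lam * √b * z) / √b)

variable {lam b z : ℝ}

lemma thetaFlow_lt_two_pi : thetaFlow lam b z < 2 * π := by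
  unfold thetaFlow; linarith [arctan_lt_pi_div_two (tan (lam * √b * z) / √b)]

lemma tan_div_sqrt_pos (hb : 0 < b) (hz : lam * √b * z ∈ Ioo 0 (π / 2)) :
    0 < tan (lam * √b * z) / √b :=
  div_pos (tan_pos_of_pos_of_lt_pi_div_two hz.1 hz.2) (sqrt_pos.2 hb)

lemma pi_lt_thetaFlow (hb : 0 < b) (hz : lam * √b * z ∈ Ioo 0 (π / 2)) :
    π < thetaFlow lam b z := by
  unfold thetaFlow; linarith [arctan_pos.2 (tan_div_sqrt_pos hb hz)]

lemma wTheta_thetaFlow_pos (hb : 0 < b) (hz : lam * √b * z ∈ Ioo 0 (π / 2)) :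
    0 < wTheta (thetaFlow lam b z) := by
  have hu := tan_div_sqrt_pos hb hz
  set u := tan (lam * √b * z) / √b
  rw [wTheta, thetaFlow, cos_pi_add_two_mul_arctan,
    show 1 + (u ^ 2 - 1) / (1 + u ^ 2) = 2 * u ^ 2 / (1 + u ^ 2) by field_simp; ring]
  positivity

lemma hasDerivAt_thetaFlow (hb : 0 < b) (hz : cos (lam * √b * z) ≠ 0) :
    HasDerivAt (thetaFlow lam b) (lam * hTheta b (thetaFlow lam b z)) z := by
  have hs : 0 < √b := sqrt_pos.2 hb
  have hu : HasDerivAt (fun z => tan (lam * √b * z) / √b)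
      (1 / cos (lam * √b * z) ^ 2 * (lam * √b) / √b) z :=
    ((hasDerivAt_tan hz).comp z ((hasDerivAt_id z).const_mul (lam * √b))).div_const √b
      |>.congr_deriv (by simp)
  have h : HasDerivAt (thetaFlow lam b) (2 * (1 / (1 + (tan (lam * √b * z) / √b) ^ 2) *
      (1 / cos (lam * √b * z) ^ 2 * (lam * √b) / √b))) z :=
    (((hasDerivAt_arctan _).comp z hu).const_mul 2).const_add π
  refine h.congr_deriv ?_
  rw [hTheta, thetaFlow, cos_pi_add_two_mul_arctan, one_div (cos _ ^ 2), ← inv_one_add_tan_sq hz,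
    inv_inv]
  have hbs : b = √b ^ 2 := (sq_sqrt hb.le).symm
  generalize √b = s at hbs hs ⊢
  subst hbs
  field_simp
  ring

end ThetaFlow

section Comparison

variable {lam b T : ℝ} {ψ : ℝ → ℝ}

lemma exists_barrier_parameters (hlam : 0 < lam) (hT : 0 < T)
    (hbT : 4 * lam ^ 2 * b * T ^ 2 < π ^ 2) :
    ∃ b₁ t₁, 0 < b₁ ∧ b < b₁ ∧ T < t₁ ∧ lam * √b₁ * t₁ < π / 2 := by
  have hK : 0 < 4 * lam ^ 2 * T ^ 2 := by positivity
  obtain ⟨b₁, hmax, hb₁K⟩ : ∃ b₁, max b 0 < b₁ ∧ b₁ < π ^ 2 / (4 * lam ^ 2 * T ^ 2) := by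
    refine exists_between ((lt_div_iff₀ hK).2 ?_)
    rcases max_cases b 0 with ⟨h, -⟩ | ⟨h, -⟩ <;> rw [h] <;> nlinarith [pi_pos]
  have hb₁ : 0 < b₁ := (le_max_right b 0).trans_lt hmax
  have hk : 0 < lam * √b₁ := by positivity
  have hkT : lam * √b₁ * T < π / 2 := by
    rw [lt_div_iff₀ hK] at hb₁K
    nlinarith [sq_sqrt hb₁.le, pi_pos]
  obtain ⟨t₁, hTt₁, ht₁⟩ := exists_between ((lt_div_iff₀' hk).2 hkT)
  exact ⟨b₁, t₁, hb₁, (le_max_left b 0).trans_lt hmax, hTt₁, (lt_div_iff₀' hk).1 ht₁⟩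

/-- The upper barrier is the explicit flow for a parameter `b₁ > max b 0`, started slightly after
time `0`: at a first contact point `ψ` then grows strictly slower than the barrier. -/
theorem lt_two_pi_of_deriv_le_hTheta (hlam : 0 < lam) (hT : 0 < T)
    (hbT : 4 * lam ^ 2 * b * T ^ 2 < π ^ 2) (hψ : Differentiable ℝ ψ) (hψ0 : ψ 0 = π)
    (hle : ∀ z ∈ Ico 0 T, deriv ψ z ≤ lam * hTheta b (ψ z)) : ψ T < 2 * π := by
  obtain ⟨b₁, t₁, hb₁, hbb₁, hTt₁, ht₁⟩ := exists_barrier_parameters hlam hT hbT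
  have hk : 0 < lam * √b₁ := by positivity
  set B := fun z => thetaFlow lam b₁ (z + (t₁ - T))
  have hmem : ∀ z ∈ Icc 0 T, lam * √b₁ * (z + (t₁ - T)) ∈ Ioo 0 (π / 2) := fun z hz =>
    ⟨by nlinarith [hz.1], by nlinarith [hz.2]⟩
  have hB : ∀ z ∈ Icc 0 T, HasDerivAt B (lam * hTheta b₁ (B z)) z := fun z hz =>
    (hasDerivAt_thetaFlow hb₁ (cos_pos_of_mem_Ioo
      ⟨by linarith [(hmem z hz).1, pi_pos], (hmem z hz).2⟩).ne').comp_add_const z _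
  have hψB : ∀ z ∈ Icc 0 T, ψ z ≤ B z := by
    refine image_le_of_deriv_right_lt_deriv_boundary' hψ.continuous.continuousOn
      (fun x _ => (hψ x).hasDerivAt.hasDerivWithinAt) ?_
      (fun x hx => (hB x hx).continuousAt.continuousWithinAt)
      (fun x hx => (hB x (Ico_subset_Icc_self hx)).hasDerivWithinAt) fun x hx hψx => ?_
    · rw [hψ0]
      exact (pi_lt_thetaFlow hb₁ (hmem 0 ⟨le_rfl, hT.le⟩)).le
    · have hw := wTheta_thetaFlow_pos hb₁ (hmem x (Ico_subset_Icc_self hx))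
      calc deriv ψ x ≤ lam * hTheta b (ψ x) := hle x hx
        _ < lam * (hTheta b (ψ x) + (b₁ - b) * wTheta (ψ x)) := by
          rw [hψx]
          have := mul_pos (sub_pos.2 hbb₁) hw
          gcongr
          linarith
        _ = lam * hTheta b₁ (B x) := by rw [hTheta_add_mul_wTheta, add_sub_cancel, hψx]
  exact (hψB T ⟨hT.le, le_rfl⟩).trans_lt thetaFlow_lt_two_pi

lemma deriv_two_pi_sub_comp_neg (z : ℝ) :
    deriv (fun z => 2 * π - ψ (-z)) z = deriv ψ (-z) := by
  rw [deriv_const_sub, deriv_comp_neg, neg_neg]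

theorem sub_lt_two_pi_of_deriv_le_hTheta (hlam : 0 < lam) (hT : 0 < T)
    (hbT : 4 * lam ^ 2 * b * T ^ 2 < π ^ 2) (hψ : Differentiable ℝ ψ) (hψ0 : ψ 0 = π)
    (hle : ∀ z, deriv ψ z ≤ lam * hTheta b (ψ z)) : ψ T - ψ (-T) < 2 * π := by
  have hforward := lt_two_pi_of_deriv_le_hTheta hlam hT hbT hψ hψ0 fun z _ => hle z
  have hbackward : 2 * π - ψ (-T) < 2 * π :=
    lt_two_pi_of_deriv_le_hTheta (ψ := fun z => 2 * π - ψ (-z)) hlam hT hbT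
      ((differentiable_const _).sub (hψ.comp differentiable_neg)) (by simp [hψ0]; ring)
      fun z _ => by rw [deriv_two_pi_sub_comp_neg, hTheta_two_pi_sub]; exact hle (-z)
  linarith

end Comparison

section Kernel

variable {c lam : ℝ}

lemma rhoC_pos (hc : 0 ≤ c) (hlam : 0 < lam) : 0 < rhoC c lam :=
  div_pos (sub_pos.2 (one_lt_exp_iff.2 (by positivity)))
    (sub_pos.2 (one_lt_exp_iff.2 (by positivity)))

lemma rTheta_nonneg (hc : 0 ≤ c) (hlam : 0 < lam) (z : ℝ) : 0 ≤ rTheta c lam z := by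
  have hA : 0 < (exp (2 * π * lam + c / 2) - 1)⁻¹ :=
    inv_pos.2 (sub_pos.2 (one_lt_exp_iff.2 (by positivity)))
  have hH : 0 ≤ Heav z := by unfold Heav; split_ifs <;> norm_num
  unfold rTheta
  positivity

lemma rTheta_eqOn_uIoo_neg_pi_zero : EqOn (rTheta c lam)
    (fun y => (exp (2 * π * lam + c / 2) - 1)⁻¹ / 2 * exp (-(lam * y))) (uIoo (-π) 0) := by
  rw [uIoo_of_le (by linarith [pi_pos])]
  intro y hy
  simp only [rTheta, Heav, if_pos hy.2]
  ring_nf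

lemma rTheta_eqOn_uIoo_zero_pi : EqOn (rTheta c lam)
    (fun y => (1 + (exp (2 * π * lam + c / 2) - 1)⁻¹) / 2 * exp (-(c / 2)) * exp (-(lam * y)))
    (uIoo 0 π) := by
  rw [uIoo_of_le pi_pos.le]
  intro y hy
  simp only [rTheta, Heav, if_neg hy.1.not_gt, neg_add, exp_add, mul_one]
  ring

lemma intervalIntegrable_rTheta_neg_pi_zero : IntervalIntegrable (rTheta c lam) volume (-π) 0 :=
  (intervalIntegrable_congr_uIoo rTheta_eqOn_uIoo_neg_pi_zero).2
    (Continuous.intervalIntegrable (by fun_prop) _ _)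

lemma intervalIntegrable_rTheta_zero_pi : IntervalIntegrable (rTheta c lam) volume 0 π :=
  (intervalIntegrable_congr_uIoo rTheta_eqOn_uIoo_zero_pi).2
    (Continuous.intervalIntegrable (by fun_prop) _ _)

lemma intervalIntegrable_rTheta : IntervalIntegrable (rTheta c lam) volume (-π) π :=
  intervalIntegrable_rTheta_neg_pi_zero.trans intervalIntegrable_rTheta_zero_pi

lemma integral_exp_neg_mul (hlam : lam ≠ 0) (a b : ℝ) :
    ∫ y in a..b, exp (-(lam * y)) = (exp (-(lam * a)) - exp (-(lam * b))) / lam := by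
  have h := integral_comp_mul_left (a := a) (b := b) exp (neg_ne_zero.2 hlam)
  simp only [neg_mul, integral_exp] at h
  rw [h, smul_eq_mul]
  field_simp
  ring

lemma integral_rTheta (hc : 0 ≤ c) (hlam : 0 < lam) :
    ∫ y in (-π)..π, rTheta c lam y = rhoC c lam / (2 * lam) := by
  rw [← integral_add_adjacent_intervals intervalIntegrable_rTheta_neg_pi_zero
      intervalIntegrable_rTheta_zero_pi, integral_congr_uIoo rTheta_eqOn_uIoo_neg_pi_zero,
    integral_congr_uIoo rTheta_eqOn_uIoo_zero_pi, intervalIntegral.integral_const_mul,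
    intervalIntegral.integral_const_mul, integral_exp_neg_mul hlam.ne',
    integral_exp_neg_mul hlam.ne', rhoC]
  have hE : exp (2 * π * lam) = exp (lam * π) ^ 2 := by rw [← exp_nat_mul]; ring_nf
  have hD : 1 ≤ exp (c / 2) := one_le_exp (by positivity)
  have hE1 : 1 < exp (lam * π) := one_lt_exp_iff.2 (by positivity)
  simp only [mul_zero, neg_zero, exp_zero, mul_neg, neg_neg, exp_neg, exp_add, hE]
  have : 0 < exp (lam * π) ^ 2 * exp (c / 2) - 1 := by nlinarith
  field_simp
  ring

end Kernel

lemma RTheta_le {J : ℝ → ℝ} {c lam M : ℝ} (hc : 0 ≤ c) (hlam : 0 < lam) (hJ : Continuous J)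
    (hJM : ∀ x, J x ≤ M) (z : ℝ) : RTheta J c lam z ≤ M * (rhoC c lam / (2 * lam)) := by
  have hr : IntervalIntegrable (rTheta c lam) volume (-π) π := intervalIntegrable_rTheta
  rw [RTheta, ← integral_rTheta hc hlam, ← intervalIntegral.integral_const_mul]
  exact integral_mono_on (by linarith [pi_pos]) (hr.continuousOn_mul (by fun_prop))
    (hr.const_mul M) fun y _ => mul_le_mul_of_nonneg_right (hJM _) (rTheta_nonneg hc hlam y)

lemma four_mul_sq_mul_lt_one_of_lt_fCB {c β lam K : ℝ} (hlam : 0 < lam) (hρ : 0 < rhoC c lam)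
    (h : K < fCB c β lam) : 4 * lam ^ 2 * (β + K * (rhoC c lam / (2 * lam))) < 1 := by
  rw [fCB, lt_div_iff₀ (by positivity)] at h
  have : 4 * lam ^ 2 * (β + K * (rhoC c lam / (2 * lam)))
      = 4 * β * lam ^ 2 + K * (2 * lam * rhoC c lam) := by
    field_simp
    ring
  linarith

theorem rotating_waves_stmt_16_general (c β g : ℝ) (hc : 0 ≤ c)
    (J : ℝ → ℝ) (hJcont : Continuous J) (hJpos : ∀ x : ℝ, 0 < J x)
    (hJper : ∀ x : ℝ, J (x + 2 * Real.pi) = J x)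
    (Ω : ℝ) (hΩ : IsLeast (fCB c β '' Set.Ioi 0) Ω)
    (hg : 0 < g) (hg0 : g < Ω / sSup (Set.range J)) :
    ∀ lam : ℝ, 0 < lam → ∀ φ : ℝ → ℝ, Differentiable ℝ φ →
      (∀ z : ℝ, deriv φ z
        = lam * hTheta β (φ z) + lam * g * RTheta J c lam z * wTheta (φ z)) →
      φ 0 = Real.pi →
      φ Real.pi - φ (-Real.pi) < 2 * Real.pi := by
  intro lam hlam φ hφ hφode hφ0
  set M := sSup (range J)
  have hJM : ∀ x, J x ≤ M := fun x =>
    le_csSup (Function.Periodic.compact_of_continuous hJper (by positivity) hJcont).bddAbove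
      (mem_range_self x)
  have hgM : g * M < fCB c β lam :=
    ((lt_div_iff₀ ((hJpos 0).trans_le (hJM 0))).1 hg0).trans_le (hΩ.2 ⟨lam, hlam, rfl⟩)
  have hb := four_mul_sq_mul_lt_one_of_lt_fCB hlam (rhoC_pos hc hlam) hgM
  refine sub_lt_two_pi_of_deriv_le_hTheta (b := β + g * M * (rhoC c lam / (2 * lam))) hlam pi_pos
    (by linarith [mul_lt_mul_of_pos_right hb (pow_pos pi_pos 2)]) hφ hφ0 fun z => ?_
  have hgR : g * RTheta J c lam z ≤ g * M * (rhoC c lam / (2 * lam)) := by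
    rw [mul_assoc]
    exact mul_le_mul_of_nonneg_left (RTheta_le hc hlam hJcont hJM z) hg.le
  calc deriv φ z = lam * (hTheta β (φ z) + g * RTheta J c lam z * wTheta (φ z)) := by
        rw [hφode]; ring
    _ ≤ lam * (hTheta β (φ z) + g * M * (rhoC c lam / (2 * lam)) * wTheta (φ z)) := by
        gcongr
        exact wTheta_nonneg _
    _ = lam * hTheta (β + g * M * (rhoC c lam / (2 * lam))) (φ z) := by
        rw [hTheta_add_mul_wTheta]

/-- Theorem 5.6 (theorem `noex`): in the excitable case `β < 0`, if
`0 < g < g₀ = Ω(c,β)/max J` where `Ω(c,β) = min_{λ>0} f_{c,β}(λ)`, then for every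
`λ > 0` the solution of (3.18)-(3.19) satisfies `φ_λ(π) - φ_λ(-π) < 2π`;
in particular no rotating wave exists. -/
theorem rotating_waves_stmt_16 (c β g : ℝ) (hc : 0 ≤ c) (hβ : β < 0)
    (J : ℝ → ℝ) (hJcont : Continuous J) (hJpos : ∀ x : ℝ, 0 < J x)
    (hJper : ∀ x : ℝ, J (x + 2 * Real.pi) = J x)
    (Ω : ℝ) (hΩ : IsLeast (fCB c β '' Set.Ioi 0) Ω)
    (hg : 0 < g) (hg0 : g < Ω / sSup (Set.range J)) :
    ∀ lam : ℝ, 0 < lam → ∀ φ : ℝ → ℝ, Differentiable ℝ φ →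
      (∀ z : ℝ, deriv φ z
        = lam * hTheta β (φ z) + lam * g * RTheta J c lam z * wTheta (φ z)) →
      φ 0 = Real.pi →
      φ Real.pi - φ (-Real.pi) < 2 * Real.pi :=
  rotating_waves_stmt_16_general c β g hc J hJcont hJpos hJper Ω hΩ hg hg0
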